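/- arXiv:2007.11934 — 4 statements merged into one kernel-verified Lean document; each statement's English description precedes it below -/
import Mathlib

section
/- Fix a finite dataset X = {x₁,…,x_n} ⊆ ℝ^d and a finite set B ⊆ ℝ^d such that for every x ∈ X there exists x_b ∈ B with ‖x − x_b‖₂ ≤ γ. Let 𝒟 be a finite set of L-Lipschitz functions D : ℝ^d → [0,1] that contains the constant function D^{1/2}(x) = 1/2. Define U(x, D) = (1/n)∑ᵢ D(xᵢ) + (1 − D(x)) and extend to distributions over B by expectation. Then there exists a distribution φ ∈ Δ(B) such that (φ, D^{1/2}) is an Lγ-approximate equilibrium of the game with payoff U; in particular the game value V satisfies 1 ≤ V ≤ 1 + Lγ. -/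
/-!
Push each data point `xᵢ` to a point `c i ∈ B` at distance at most `γ` and let `φ` be the
empirical distribution of `c 1, …, c n`. Every payoff then has the form
`U(φ, D) = 1 + (1/n) Σᵢ (D(xᵢ) − D(c i))`, so `U(φ, D) ≤ 1 + Lγ` for every `L`-Lipschitz
`D`, while the constant discriminator `1/2` gives payoff exactly `1` against every distribution.
-/

open Finset

/-- The post-GAN payoff of a mixed synthetic strategy `φ` (supported on `B`)
against a discriminator `D`, for a private dataset `X` of size `n`:
`U(φ, D) = Σ_{x ∈ B} φ(x) · ((1/n) Σ_i D(xᵢ) + (1 − D(x)))`. -/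
noncomputable def postGANPayoff {d n : ℕ} (X : Fin n → EuclideanSpace ℝ (Fin d))
    (B : Finset (EuclideanSpace ℝ (Fin d)))
    (φ : EuclideanSpace ℝ (Fin d) → ℝ) (D : EuclideanSpace ℝ (Fin d) → ℝ) : ℝ :=
  ∑ x ∈ B, φ x * ((1 / (n : ℝ)) * ∑ i, D (X i) + (1 - D x))

section Empirical

variable {ι α : Type*} [Fintype ι] [DecidableEq α]

noncomputable def empiricalWeight (c : ι → α) (x : α) : ℝ :=
  (#{i | c i = x} : ℝ) / Fintype.card ι

variable {c : ι → α} {B : Finset α}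

lemma empiricalWeight_nonneg (c : ι → α) (x : α) : 0 ≤ empiricalWeight c x := by
  unfold empiricalWeight
  positivity

lemma empiricalWeight_eq_zero_of_notMem (hc : ∀ i, c i ∈ B) {x : α} (hx : x ∉ B) :
    empiricalWeight c x = 0 := by
  have hfiber : ({i | c i = x} : Finset ι) = ∅ :=
    filter_false_of_mem fun i _ hi => hx (hi ▸ hc i)
  simp [empiricalWeight, hfiber]

lemma sum_empiricalWeight_mul (hc : ∀ i, c i ∈ B) (f : α → ℝ) :
    ∑ x ∈ B, empiricalWeight c x * f x = (∑ i, f (c i)) / Fintype.card ι := by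
  rw [← sum_fiberwise_of_maps_to' (fun i _ => hc i) f, sum_div]
  refine sum_congr rfl fun x _ => ?_
  rw [sum_const, nsmul_eq_mul, empiricalWeight]
  ring

lemma sum_empiricalWeight [Nonempty ι] (hc : ∀ i, c i ∈ B) :
    ∑ x ∈ B, empiricalWeight c x = 1 := by
  simpa using sum_empiricalWeight_mul hc (fun _ => 1)

end Empirical

lemma LipschitzWith.sum_sub_le {α ι : Type*} [PseudoMetricSpace α] {K : NNReal} {f : α → ℝ}
    (hf : LipschitzWith K f) (s : Finset ι) {x y : ι → α} {γ : ℝ}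
    (hxy : ∀ i ∈ s, dist (x i) (y i) ≤ γ) :
    ∑ i ∈ s, (f (x i) - f (y i)) ≤ #s * (K * γ) := by
  rw [← nsmul_eq_mul, ← sum_const]
  refine sum_le_sum fun i hi => ?_
  calc f (x i) - f (y i) ≤ dist (f (x i)) (f (y i)) := Real.sub_le_dist _ _
    _ ≤ K * dist (x i) (y i) := hf.dist_le_mul _ _
    _ ≤ K * γ := by gcongr; exact hxy i hi

section Payoff

variable {d n : ℕ} (X : Fin n → EuclideanSpace ℝ (Fin d))
  (B : Finset (EuclideanSpace ℝ (Fin d))) {φ : EuclideanSpace ℝ (Fin d) → ℝ}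

lemma postGANPayoff_eq (hφ : ∑ x ∈ B, φ x = 1) (D : EuclideanSpace ℝ (Fin d) → ℝ) :
    postGANPayoff X B φ D = 1 + (1 / (n : ℝ)) * ∑ i, D (X i) - ∑ x ∈ B, φ x * D x := by
  simp only [postGANPayoff, mul_add, mul_sub, mul_one, sum_add_distrib, sum_sub_distrib,
    ← sum_mul, hφ]
  ring

lemma postGANPayoff_const_half (hn : 0 < n) (hφ : ∑ x ∈ B, φ x = 1) :
    postGANPayoff X B φ (fun _ => 1 / 2) = 1 := by
  rw [postGANPayoff_eq X B hφ, ← sum_mul, hφ]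
  simp only [sum_const, card_univ, Fintype.card_fin, nsmul_eq_mul]
  field_simp
  ring

lemma postGANPayoff_empiricalWeight_le [DecidableEq (EuclideanSpace ℝ (Fin d))]
    {c : Fin n → EuclideanSpace ℝ (Fin d)} (hn : 0 < n) (hcB : ∀ i, c i ∈ B) {γ : ℝ}
    (hcγ : ∀ i, ‖X i - c i‖ ≤ γ) {K : NNReal} {D : EuclideanSpace ℝ (Fin d) → ℝ}
    (hD : LipschitzWith K D) :
    postGANPayoff X B (empiricalWeight c) D ≤ 1 + K * γ := by
  have : Nonempty (Fin n) := ⟨⟨0, hn⟩⟩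
  have hdrift : ∑ i, D (X i) - ∑ i, D (c i) ≤ n * (K * γ) := by
    simpa [sum_sub_distrib] using
      hD.sum_sub_le univ fun i _ => (dist_eq_norm (X i) (c i)).trans_le (hcγ i)
  have hn' : (0 : ℝ) < n := Nat.cast_pos.mpr hn
  rw [postGANPayoff_eq X B (sum_empiricalWeight hcB), sum_empiricalWeight_mul hcB,
    Fintype.card_fin]
  calc 1 + 1 / (n : ℝ) * ∑ i, D (X i) - (∑ i, D (c i)) / n
      = 1 + (∑ i, D (X i) - ∑ i, D (c i)) / n := by ring
    _ ≤ 1 + n * (K * γ) / n := by gcongr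
    _ = 1 + K * γ := by field_simp

end Payoff

theorem post_GAN_game_coverage_general
    {d n : ℕ} (hn : 0 < n) (X : Fin n → EuclideanSpace ℝ (Fin d))
    (B : Finset (EuclideanSpace ℝ (Fin d)))
    (𝒟 : Finset (EuclideanSpace ℝ (Fin d) → ℝ))
    (L γ : ℝ) (hL : 0 ≤ L) (hγ : 0 ≤ γ)
    (hLip : ∀ D ∈ 𝒟, LipschitzWith (Real.toNNReal L) D)
    (hhalf : (fun _ => (1 / 2 : ℝ)) ∈ 𝒟)
    (hcover : ∀ i : Fin n, ∃ xb ∈ B, ‖X i - xb‖ ≤ γ) :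
    ∃ φ : EuclideanSpace ℝ (Fin d) → ℝ,
      (∀ x, 0 ≤ φ x) ∧ (∀ x ∉ B, φ x = 0) ∧ (∑ x ∈ B, φ x = 1) ∧
      -- (φ, D^{1/2}) is an Lγ-approximate equilibrium:
      (∀ D ∈ 𝒟, postGANPayoff X B φ D
          ≤ postGANPayoff X B φ (fun _ => (1 / 2 : ℝ)) + L * γ) ∧
      (∀ φ' : EuclideanSpace ℝ (Fin d) → ℝ, (∀ x, 0 ≤ φ' x) →
          (∀ x ∉ B, φ' x = 0) → (∑ x ∈ B, φ' x = 1) →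
          postGANPayoff X B φ (fun _ => (1 / 2 : ℝ)) - L * γ
            ≤ postGANPayoff X B φ' (fun _ => (1 / 2 : ℝ))) ∧
      -- lower bound on the game value: every mixed strategy is distinguished
      -- with payoff at least 1 by some discriminator in 𝒟:
      (∀ φ' : EuclideanSpace ℝ (Fin d) → ℝ, (∀ x, 0 ≤ φ' x) →
          (∀ x ∉ B, φ' x = 0) → (∑ x ∈ B, φ' x = 1) →
          ∃ D ∈ 𝒟, 1 ≤ postGANPayoff X B φ' D) ∧
      -- upper bound on the game value, witnessed by φ itself:
      (∀ D ∈ 𝒟, postGANPayoff X B φ D ≤ 1 + L * γ) := by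
  classical
  choose c hcB hcγ using hcover
  have : Nonempty (Fin n) := ⟨⟨0, hn⟩⟩
  have hφ : ∑ x ∈ B, empiricalWeight c x = 1 := sum_empiricalWeight hcB
  have hupper : ∀ D ∈ 𝒟, postGANPayoff X B (empiricalWeight c) D ≤ 1 + L * γ := by
    intro D hD
    simpa [Real.coe_toNNReal L hL] using
      postGANPayoff_empiricalWeight_le X B hn hcB hcγ (hLip D hD)
  have hLγ : 0 ≤ L * γ := mul_nonneg hL hγ
  refine ⟨empiricalWeight c, empiricalWeight_nonneg c,
    fun _ => empiricalWeight_eq_zero_of_notMem hcB, hφ, ?_, ?_, ?_, hupper⟩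
  · intro D hD
    rw [postGANPayoff_const_half X B hn hφ]
    exact hupper D hD
  · intro φ' _ _ hφ'
    rw [postGANPayoff_const_half X B hn hφ, postGANPayoff_const_half X B hn hφ']
    linarith
  · exact fun φ' _ _ hφ' => ⟨_, hhalf, (postGANPayoff_const_half X B hn hφ').ge⟩

/-- under γ-coverage of the dataset by `B`, and with `𝒟` a finite
set of L-Lipschitz discriminators containing the constant-1/2 discriminator,
there is a distribution `φ ∈ Δ(B)` such that `(φ, D^{1/2})` is an
`Lγ`-approximate equilibrium; in particular `1 ≤ V ≤ 1 + Lγ`. -/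
theorem post_GAN_game_coverage
    {d n : ℕ} (hn : 0 < n) (X : Fin n → EuclideanSpace ℝ (Fin d))
    (B : Finset (EuclideanSpace ℝ (Fin d)))
    (𝒟 : Finset (EuclideanSpace ℝ (Fin d) → ℝ))
    (L γ : ℝ) (hL : 0 ≤ L) (hγ : 0 ≤ γ)
    (hLip : ∀ D ∈ 𝒟, LipschitzWith (Real.toNNReal L) D)
    (hrange : ∀ D ∈ 𝒟, ∀ x, D x ∈ Set.Icc (0 : ℝ) 1)
    (hhalf : (fun _ => (1 / 2 : ℝ)) ∈ 𝒟)
    (hcover : ∀ i : Fin n, ∃ xb ∈ B, ‖X i - xb‖ ≤ γ) :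
    ∃ φ : EuclideanSpace ℝ (Fin d) → ℝ,
      (∀ x, 0 ≤ φ x) ∧ (∀ x ∉ B, φ x = 0) ∧ (∑ x ∈ B, φ x = 1) ∧
      -- (φ, D^{1/2}) is an Lγ-approximate equilibrium:
      (∀ D ∈ 𝒟, postGANPayoff X B φ D
          ≤ postGANPayoff X B φ (fun _ => (1 / 2 : ℝ)) + L * γ) ∧
      (∀ φ' : EuclideanSpace ℝ (Fin d) → ℝ, (∀ x, 0 ≤ φ' x) →
          (∀ x ∉ B, φ' x = 0) → (∑ x ∈ B, φ' x = 1) →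
          postGANPayoff X B φ (fun _ => (1 / 2 : ℝ)) - L * γ
            ≤ postGANPayoff X B φ' (fun _ => (1 / 2 : ℝ))) ∧
      -- lower bound on the game value: every mixed strategy is distinguished
      -- with payoff at least 1 by some discriminator in 𝒟:
      (∀ φ' : EuclideanSpace ℝ (Fin d) → ℝ, (∀ x, 0 ≤ φ' x) →
          (∀ x ∉ B, φ' x = 0) → (∑ x ∈ B, φ' x = 1) →
          ∃ D ∈ 𝒟, 1 ≤ postGANPayoff X B φ' D) ∧
      -- upper bound on the game value, witnessed by φ itself:
      (∀ D ∈ 𝒟, postGANPayoff X B φ D ≤ 1 + L * γ) :=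
  post_GAN_game_coverage_general hn X B 𝒟 L γ hL hγ hLip hhalf hcover
end

section
/- (Multiplicative weights regret bound) Let B be a finite set and for t = 1,…,T let ℓ_t : B → [0,1] be loss functions. Define the multiplicative weights iterates φ^1 uniform on B and φ^{t+1}(b) ∝ φ^t(b)·exp(−η ℓ_t(b)) for learning rate η ∈ (0, 1/2]. Then ∑_{t=1}^T E_{b∼φ^t}[ℓ_t(b)] − min_{b∈B} ∑_{t=1}^T ℓ_t(b) ≤ η T + (log |B|)/η. -/
/-!
With `Z_s = ∑_b φ^s(b) e^{-η ℓ_s(b)}` the normaliser of step `s`, the update unrolls to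
`φ^t(b) ∏_{s<t} Z_s = φ^0(b) e^{-η ∑_{s<t} ℓ_s(b)}`. The inequality `e^x ≤ 1 + x + x²` (`x ≤ 1`)
bounds each normaliser by `e^{-η E_s + η²}`, where `E_s` is the expected loss under `φ^s`.
Since `φ^T(b) ≤ 1`, every expert `b` satisfies
`e^{-η ∑_s ℓ_s(b)} / |B| ≤ e^{-η ∑_s E_s + η² T}`, and taking logarithms gives the regret bound.
-/

open Finset Real

lemma Real.exp_le_one_add_add_sq {x : ℝ} (hx : x ≤ 1) : exp x ≤ 1 + x + x ^ 2 := by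
  rcases le_or_gt x (-1) with hx' | hx'
  · calc exp x ≤ 1 := exp_le_one_iff.2 (by linarith)
      _ ≤ 1 + x + x ^ 2 := by nlinarith
  · have := abs_le.1 (abs_exp_sub_one_sub_id_le (abs_le.2 ⟨hx'.le, hx⟩))
    linarith [this.2]

section stdSimplex

variable {B : Type*} [Fintype B] {p w : B → ℝ}

lemma sum_mul_pos_of_mem_stdSimplex (hp : p ∈ stdSimplex ℝ B) (hw : ∀ b, 0 < w b) :
    0 < ∑ b, p b * w b := by
  obtain ⟨b, -, hb⟩ : ∃ b ∈ univ, (0 : ℝ) < p b :=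
    exists_lt_of_sum_lt (by simp [hp.2])
  exact sum_pos' (fun b _ => mul_nonneg (hp.1 b) (hw b).le) ⟨b, mem_univ b, mul_pos hb (hw b)⟩

lemma reweight_mem_stdSimplex (hp : p ∈ stdSimplex ℝ B) (hw : ∀ b, 0 < w b) :
    (fun b => p b * w b / ∑ b', p b' * w b') ∈ stdSimplex ℝ B := by
  have hZ := sum_mul_pos_of_mem_stdSimplex hp hw
  exact ⟨fun b => div_nonneg (mul_nonneg (hp.1 b) (hw b).le) hZ.le,
    by rw [← sum_div, div_self hZ.ne']⟩

lemma sum_mul_exp_neg_mul_le (hp : p ∈ stdSimplex ℝ B) {x : B → ℝ}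
    (hx : ∀ b, x b ∈ Set.Icc (0 : ℝ) 1) {η : ℝ} (hη : 0 ≤ η) :
    ∑ b, p b * exp (-η * x b) ≤ exp (-η * ∑ b, p b * x b + η ^ 2) :=
  calc ∑ b, p b * exp (-η * x b) ≤ ∑ b, p b * (1 + -η * x b + η ^ 2) := by
        gcongr with b
        · exact hp.1 b
        obtain ⟨hx0, hx1⟩ := hx b
        calc exp (-η * x b) ≤ 1 + -η * x b + (-η * x b) ^ 2 :=
              exp_le_one_add_add_sq (by nlinarith)
          _ ≤ 1 + -η * x b + η ^ 2 := by
              rw [mul_pow, neg_sq]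
              gcongr
              exact mul_le_of_le_one_right (sq_nonneg η) (pow_le_one₀ hx0 hx1)
    _ = -η * ∑ b, p b * x b + η ^ 2 + 1 := by
        have hexpand : ∀ b, p b * (1 + -η * x b + η ^ 2) = (1 + η ^ 2) * p b + -η * (p b * x b) :=
          fun b => by ring
        rw [sum_congr rfl fun b _ => hexpand b, sum_add_distrib, ← mul_sum, ← mul_sum, hp.2]
        ring
    _ ≤ exp (-η * ∑ b, p b * x b + η ^ 2) := add_one_le_exp _

end stdSimplex

noncomputable def hedgeUpdate {B : Type*} [Fintype B] (η : ℝ) (x p : B → ℝ) : B → ℝ :=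
  fun b => p b * exp (-η * x b) / ∑ b', p b' * exp (-η * x b')

section Hedge

variable {B : Type*} [Fintype B] {η : ℝ} {ℓ φ : ℕ → B → ℝ} {T : ℕ}

lemma hedge_mem_stdSimplex (h0 : φ 0 ∈ stdSimplex ℝ B)
    (hrec : ∀ t < T, φ (t + 1) = hedgeUpdate η (ℓ t) (φ t)) :
    ∀ t ≤ T, φ t ∈ stdSimplex ℝ B := by
  intro t ht
  induction t with
  | zero => exact h0
  | succ t ih =>
    rw [hrec t ht]
    exact reweight_mem_stdSimplex (ih (by omega)) fun _ => exp_pos _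

lemma hedge_potential_le (hη : 0 ≤ η) (hℓ : ∀ t < T, ∀ b, ℓ t b ∈ Set.Icc (0 : ℝ) 1)
    (h0 : φ 0 ∈ stdSimplex ℝ B)
    (hrec : ∀ t < T, φ (t + 1) = hedgeUpdate η (ℓ t) (φ t)) :
    ∀ t ≤ T, ∀ b, φ 0 b * exp (-η * ∑ s ∈ range t, ℓ s b) ≤
      φ t b * exp (∑ s ∈ range t, (-η * ∑ b', φ s b' * ℓ s b' + η ^ 2)) := by
  intro t ht b
  induction t with
  | zero => simp
  | succ t ih =>
    have hφ := hedge_mem_stdSimplex h0 hrec t (by omega)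
    set Z := ∑ b', φ t b' * exp (-η * ℓ t b')
    have hZ : 0 < Z := sum_mul_pos_of_mem_stdSimplex hφ fun _ => exp_pos _
    have hZle : Z ≤ exp (-η * ∑ b', φ t b' * ℓ t b' + η ^ 2) :=
      sum_mul_exp_neg_mul_le hφ (hℓ t ht) hη
    have hφstep : φ t b * exp (-η * ℓ t b) = φ (t + 1) b * Z := by
      rw [hrec t ht, hedgeUpdate, div_mul_cancel₀ _ hZ.ne']
    have hφsucc : 0 ≤ φ (t + 1) b := (hedge_mem_stdSimplex h0 hrec (t + 1) ht).1 b
    calc φ 0 b * exp (-η * ∑ s ∈ range (t + 1), ℓ s b)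
        = φ 0 b * exp (-η * ∑ s ∈ range t, ℓ s b) * exp (-η * ℓ t b) := by
          rw [sum_range_succ, mul_add, exp_add, mul_assoc]
      _ ≤ φ t b * exp (∑ s ∈ range t, (-η * ∑ b', φ s b' * ℓ s b' + η ^ 2)) *
            exp (-η * ℓ t b) :=
          mul_le_mul_of_nonneg_right (ih (by omega)) (exp_pos _).le
      _ = φ (t + 1) b * Z * exp (∑ s ∈ range t, (-η * ∑ b', φ s b' * ℓ s b' + η ^ 2)) := by
          rw [← hφstep]; ring
      _ ≤ φ (t + 1) b * exp (-η * ∑ b', φ t b' * ℓ t b' + η ^ 2) *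
            exp (∑ s ∈ range t, (-η * ∑ b', φ s b' * ℓ s b' + η ^ 2)) := by gcongr
      _ = φ (t + 1) b * exp (∑ s ∈ range (t + 1), (-η * ∑ b', φ s b' * ℓ s b' + η ^ 2)) := by
          rw [sum_range_succ, exp_add (∑ s ∈ range t, _)]; ring

lemma hedge_regret_le (hη : 0 < η) (hℓ : ∀ t < T, ∀ b, ℓ t b ∈ Set.Icc (0 : ℝ) 1)
    (h0 : ∀ b, φ 0 b = 1 / (Fintype.card B : ℝ))
    (hrec : ∀ t < T, φ (t + 1) = hedgeUpdate η (ℓ t) (φ t)) (b : B) :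
    ∑ t ∈ range T, ∑ b', φ t b' * ℓ t b' - ∑ t ∈ range T, ℓ t b ≤
      η * T + log (Fintype.card B) / η := by
  have hcard : (0 : ℝ) < Fintype.card B := by exact_mod_cast Fintype.card_pos_iff.2 ⟨b⟩
  have h0' : φ 0 ∈ stdSimplex ℝ B :=
    ⟨fun b => by rw [h0]; positivity, by simp [h0, hcard.ne']⟩
  have hφT := hedge_mem_stdSimplex h0' hrec T le_rfl
  have hφTb : φ T b ≤ 1 := hφT.2 ▸ single_le_sum (fun b _ => hφT.1 b) (mem_univ b)
  have key := (hedge_potential_le hη.le hℓ h0' hrec T le_rfl b).trans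
    (mul_le_of_le_one_left (exp_pos _).le hφTb)
  rw [h0, ← log_le_log_iff (by positivity) (exp_pos _), log_mul (by positivity) (exp_pos _).ne',
    log_exp, log_exp, one_div, log_inv, sum_add_distrib, ← mul_sum, sum_const, card_range,
    nsmul_eq_mul] at key
  rw [← sub_le_iff_le_add', le_div_iff₀ hη]
  linarith

end Hedge

theorem multiplicative_weights_regret_general
    {B : Type*} [Fintype B] [Nonempty B] (T : ℕ) (ℓ : Fin T → B → ℝ)
    (hℓ : ∀ t b, ℓ t b ∈ Set.Icc (0 : ℝ) 1)
    (η : ℝ) (hη0 : 0 < η)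
    (φ : ℕ → B → ℝ)
    (h0 : ∀ b, φ 0 b = 1 / (Fintype.card B : ℝ))
    (hrec : ∀ t : Fin T, ∀ b, φ (t + 1) b =
        φ t b * Real.exp (-η * ℓ t b) /
          ∑ b', φ t b' * Real.exp (-η * ℓ t b')) :
    (∑ t : Fin T, ∑ b, φ t b * ℓ t b) -
        Finset.univ.inf' Finset.univ_nonempty (fun b => ∑ t : Fin T, ℓ t b)
      ≤ η * T + Real.log (Fintype.card B) / η := by
  set L : ℕ → B → ℝ := fun s b => if h : s < T then ℓ ⟨s, h⟩ b else 0
  have hL : ∀ t : Fin T, L t = ℓ t := fun t => by ext b; simp [L]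
  obtain ⟨b, -, hb⟩ := exists_mem_eq_inf' univ_nonempty fun b => ∑ t : Fin T, ℓ t b
  have := hedge_regret_le (ℓ := L) (T := T) hη0
    (fun t ht b => by simpa [L, ht] using hℓ ⟨t, ht⟩ b) h0
    (fun t ht => funext fun b => by simpa [L, ht, hedgeUpdate] using hrec ⟨t, ht⟩ b) b
  simp only [← Fin.sum_univ_eq_sum_range, hL] at this
  rwa [hb]

/-- Multiplicative weights regret bound: for losses `ℓ_t : B → [0,1]`
and the exponential-weights iterates `φ^1` uniform,
`φ^{t+1}(b) ∝ φ^t(b) exp(−η ℓ_t(b))` with `η ∈ (0, 1/2]`, we have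
`Σ_t E_{b∼φ^t}[ℓ_t(b)] − min_b Σ_t ℓ_t(b) ≤ ηT + log|B|/η`. -/
theorem multiplicative_weights_regret
    {B : Type*} [Fintype B] [Nonempty B] (T : ℕ) (ℓ : Fin T → B → ℝ)
    (hℓ : ∀ t b, ℓ t b ∈ Set.Icc (0 : ℝ) 1)
    (η : ℝ) (hη0 : 0 < η) (hη : η ≤ 1 / 2)
    (φ : ℕ → B → ℝ)
    (h0 : ∀ b, φ 0 b = 1 / (Fintype.card B : ℝ))
    (hrec : ∀ t : Fin T, ∀ b, φ (t + 1) b =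
        φ t b * Real.exp (-η * ℓ t b) /
          ∑ b', φ t b' * Real.exp (-η * ℓ t b')) :
    (∑ t : Fin T, ∑ b, φ t b * ℓ t b) -
        Finset.univ.inf' Finset.univ_nonempty (fun b => ∑ t : Fin T, ℓ t b)
      ≤ η * T + Real.log (Fintype.card B) / η :=
  multiplicative_weights_regret_general T ℓ hℓ η hη0 φ h0 hrec
end

section
/- (Exponential mechanism privacy) Let q : X^n × R → ℝ be a quality score over a finite range R with sensitivity Δ(q) = max_{r∈R} max_{X∼X'} |q(X, r) − q(X', r)|. The exponential mechanism, which on input X outputs r ∈ R with probability proportional to exp(ε · q(X, r) / (2Δ(q))), is (ε, 0)-differentially private. -/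
/-!
If two score functions `f, g` on a finite set differ by at most `c` everywhere, then each weight
`exp (f i)` exceeds `exp (g i)` by a factor of at most `exp c`, and the normalising constant
`∑ exp (g j)` exceeds `∑ exp (f j)` by at most the same factor; hence the Gibbs probabilities
differ by a factor of at most `exp (2 c)`. Sensitivity `Δ` makes the scores `ε q(X, ·) / (2Δ)`
of adjacent datasets differ by at most `ε / 2`.
-/

open Finset

/-- Two datasets in `𝒳^n` are adjacent if they differ in at most one record. -/
def Adjacent {𝒳 : Type*} {n : ℕ} (X X' : Fin n → 𝒳) : Prop :=
  ∃ i : Fin n, ∀ j : Fin n, j ≠ i → X j = X' j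

namespace Real

theorem exp_le_exp_mul_exp_of_sub_le {x y c : ℝ} (h : x - y ≤ c) :
    exp x ≤ exp c * exp y := by
  rw [← exp_add]
  exact exp_le_exp.2 (by linarith)

theorem sum_exp_le_exp_mul_sum_exp {ι : Type*} (s : Finset ι) {f g : ι → ℝ} {c : ℝ}
    (h : ∀ i ∈ s, f i - g i ≤ c) :
    ∑ i ∈ s, exp (f i) ≤ exp c * ∑ i ∈ s, exp (g i) := by
  rw [mul_sum]
  exact sum_le_sum fun i hi => exp_le_exp_mul_exp_of_sub_le (h i hi)

theorem exp_div_sum_exp_le_exp_mul {ι : Type*} [Fintype ι] {f g : ι → ℝ} {c : ℝ}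
    (h : ∀ i, |f i - g i| ≤ c) (i : ι) :
    exp (f i) / ∑ j, exp (f j) ≤ exp (2 * c) * (exp (g i) / ∑ j, exp (g j)) := by
  have hg_pos : 0 < ∑ j, exp (g j) := sum_pos (fun j _ => exp_pos (g j)) ⟨i, mem_univ i⟩
  have hsum : ∑ j, exp (g j) ≤ exp c * ∑ j, exp (f j) :=
    sum_exp_le_exp_mul_sum_exp univ fun j _ => by linarith [(abs_le.1 (h j)).1]
  calc exp (f i) / ∑ j, exp (f j)
      ≤ exp c * exp (g i) / (exp (-c) * ∑ j, exp (g j)) := by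
        refine div_le_div₀ (by positivity) (exp_le_exp_mul_exp_of_sub_le (abs_le.1 (h i)).2)
          (by positivity) ?_
        rwa [exp_neg, inv_mul_le_iff₀ (exp_pos c)]
    _ = exp (2 * c) * (exp (g i) / ∑ j, exp (g j)) := by
        rw [exp_neg, two_mul, exp_add]
        field_simp

end Real

theorem abs_mul_div_sub_mul_div_le_half {a b Δ ε : ℝ} (hΔ : 0 < Δ) (hε : 0 ≤ ε)
    (h : |a - b| ≤ Δ) :
    |ε * a / (2 * Δ) - ε * b / (2 * Δ)| ≤ ε / 2 := by
  have h2Δ : 0 < 2 * Δ := mul_pos two_pos hΔ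
  rw [← sub_div, ← mul_sub, abs_div, abs_mul, abs_of_nonneg hε, abs_of_pos h2Δ,
    div_le_div_iff₀ h2Δ two_pos]
  linarith [mul_le_mul_of_nonneg_left h hε]

theorem exponential_mechanism_privacy_general
    {𝒳 : Type*} {n : ℕ} {R : Type*} [Fintype R]
    (q : (Fin n → 𝒳) → R → ℝ) (Δ ε : ℝ) (hΔ : 0 < Δ) (hε : 0 ≤ ε)
    (hsens : ∀ r : R, ∀ X X' : Fin n → 𝒳, Adjacent X X' →
        |q X r - q X' r| ≤ Δ) :
    ∀ X X' : Fin n → 𝒳, Adjacent X X' → ∀ r : R,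
      Real.exp (ε * q X r / (2 * Δ)) / (∑ r', Real.exp (ε * q X r' / (2 * Δ)))
        ≤ Real.exp ε *
          (Real.exp (ε * q X' r / (2 * Δ)) /
            (∑ r', Real.exp (ε * q X' r' / (2 * Δ)))) := by
  intro X X' hadj r
  have hscores (r' : R) : |ε * q X r' / (2 * Δ) - ε * q X' r' / (2 * Δ)| ≤ ε / 2 :=
    abs_mul_div_sub_mul_div_le_half hΔ hε (hsens r' X X' hadj)
  simpa only [mul_div_cancel₀ ε two_ne_zero] using Real.exp_div_sum_exp_le_exp_mul hscores r

/-- Exponential mechanism privacy: for a quality score `q` over a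
finite range `R` with sensitivity at most `Δ`, the mechanism outputting `r` with
probability proportional to `exp(ε q(X, r) / (2Δ))` is `(ε, 0)`-DP: the output
probabilities on adjacent datasets differ by a factor of at most `e^ε`. -/
theorem exponential_mechanism_privacy
    {𝒳 : Type*} {n : ℕ} {R : Type*} [Fintype R] [Nonempty R]
    (q : (Fin n → 𝒳) → R → ℝ) (Δ ε : ℝ) (hΔ : 0 < Δ) (hε : 0 ≤ ε)
    (hsens : ∀ r : R, ∀ X X' : Fin n → 𝒳, Adjacent X X' →
        |q X r - q X' r| ≤ Δ) :
    ∀ X X' : Fin n → 𝒳, Adjacent X X' → ∀ r : R,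
      Real.exp (ε * q X r / (2 * Δ)) / (∑ r', Real.exp (ε * q X r' / (2 * Δ)))
        ≤ Real.exp ε *
          (Real.exp (ε * q X' r / (2 * Δ)) /
            (∑ r', Real.exp (ε * q X' r' / (2 * Δ)))) :=
  exponential_mechanism_privacy_general q Δ ε hΔ hε hsens
end

section
/- (Exponential mechanism utility) Let q : X^n × R → ℝ be a quality score over a finite range R of size N with sensitivity Δ. For a fixed dataset X, let OPT = max_{r∈R} q(X, r). If r is sampled with probability proportional to exp(ε q(X, r)/(2Δ)), then for any β ∈ (0,1), with probability at least 1 − β, q(X, r) ≥ OPT − (2Δ/ε)·log(N/β). -/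
/-! Every output scoring more than `t` below some `u r₀` has Gibbs weight at most `exp (-t)` times
that of `r₀`, hence at most `exp (-t)` of the total mass, and there are at most `card ι` of them.
The exponential mechanism is the case `u = ε q / (2Δ)`, `t = log (N / β)`, `r₀` a maximiser of `q`. -/

open Finset

theorem sum_gibbs_filter_lt_sub_le {ι : Type*} [Fintype ι] (u : ι → ℝ) (r₀ : ι) (t : ℝ) :
    ∑ r ∈ univ.filter (fun r => u r < u r₀ - t), Real.exp (u r) / ∑ r', Real.exp (u r')
      ≤ Fintype.card ι * Real.exp (-t) := by
  set Z := ∑ r', Real.exp (u r')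
  have hZ : 0 < Z := sum_pos (fun r _ => Real.exp_pos _) ⟨r₀, mem_univ _⟩
  have hterm : ∀ r ∈ univ.filter (fun r => u r < u r₀ - t), Real.exp (u r) / Z ≤ Real.exp (-t) := by
    intro r hr
    rw [div_le_iff₀ hZ]
    calc Real.exp (u r) ≤ Real.exp (-t) * Real.exp (u r₀) := by
          rw [← Real.exp_add]
          exact Real.exp_le_exp.2 (by linarith [(mem_filter.1 hr).2])
      _ ≤ Real.exp (-t) * Z := by
          gcongr
          exact single_le_sum (fun r _ => (Real.exp_pos _).le) (mem_univ r₀)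
  calc _ ≤ #(univ.filter fun r => u r < u r₀ - t) • Real.exp (-t) := sum_le_card_nsmul _ _ _ hterm
    _ ≤ Fintype.card ι * Real.exp (-t) := by
        rw [nsmul_eq_mul]
        gcongr
        exact_mod_cast card_filter_le _ _

/-- Exponential mechanism utility: over a finite range `R` of size
`N`, if `r` is sampled with probability proportional to `exp(ε q(r)/(2Δ))`, then
the probability that `q(r) < OPT − (2Δ/ε) log(N/β)` is at most `β`. -/
theorem exponential_mechanism_utility
    {R : Type*} [Fintype R] [Nonempty R]
    (q : R → ℝ) (Δ ε β : ℝ) (hΔ : 0 < Δ) (hε : 0 < ε)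
    (hβ : β ∈ Set.Ioo (0 : ℝ) 1)
    (N : ℕ) (hN : N = Fintype.card R)
    (OPT : ℝ) (hOPT : OPT = Finset.univ.sup' Finset.univ_nonempty q) :
    ∑ r ∈ Finset.univ.filter
        (fun r => q r < OPT - (2 * Δ / ε) * Real.log (N / β)),
      Real.exp (ε * q r / (2 * Δ)) / (∑ r', Real.exp (ε * q r' / (2 * Δ)))
      ≤ β := by
  obtain ⟨hβ0, -⟩ := hβ
  obtain ⟨r₀, -, hr₀⟩ := exists_mem_eq_sup' univ_nonempty q
  set L := Real.log (N / β)
  have hscale : ∀ r, q r < OPT - (2 * Δ / ε) * L ↔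
      ε * q r / (2 * Δ) < ε * q r₀ / (2 * Δ) - L := by
    intro r
    rw [hOPT, hr₀, ← mul_lt_mul_iff_of_pos_left (show 0 < ε / (2 * Δ) by positivity)]
    field_simp
  have hN0 : (0 : ℝ) < N := by rw [hN]; exact_mod_cast Fintype.card_pos
  rw [filter_congr fun r _ => hscale r]
  calc _ ≤ Fintype.card R * Real.exp (-L) :=
        sum_gibbs_filter_lt_sub_le (fun r => ε * q r / (2 * Δ)) r₀ L
    _ = β := by
        rw [Real.exp_neg, Real.exp_log (by positivity), ← hN]
        field_simp
end
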